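/- arXiv:2208.12689 — 2 statements merged into one kernel-verified Lean document; each statement's English description precedes it below -/
import Mathlib

section
/- Let R ∈ {0,1}^{m×n} be a binary matrix with row sums d_u = Σ_i R_{ui} and column sums d_i = Σ_u R_{ui}, let α ≥ 0, and let d_max be an upper bound on all d_u and all d_i with d_max > 0. Let Ṙ be the matrix with entries Ṙ_{ui} = R_{ui}/(√(d_u+α) · √(d_i+α)). If σ ≥ 0 and p ∈ ℝ^m, q ∈ ℝ^n are unit vectors with Ṙ q = σ p and Ṙᵀ p = σ q, then σ ≤ d_max/(d_max + α). -/
/-!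
By AM–GM, `2 Ṙ_{ui} p_u q_i ≤ R_{ui} (p_u² / (d_u+α) + q_i² / (d_i+α))`. Summing over all
entries bounds `2 pᵀ Ṙ q` by `∑_u p_u² d_u/(d_u+α) + ∑_i q_i² d_i/(d_i+α)`, and each of these
sums is a convex combination of values `d/(d+α) ≤ d_max/(d_max+α)`. For a singular pair,
`pᵀ Ṙ q = σ`.
-/

open Matrix BigOperators

lemma div_add_le_div_add {a b c : ℝ} (ha : 0 ≤ a) (hab : a ≤ b) (hc : 0 ≤ c) :
    a / (a + c) ≤ b / (b + c) := by
  rcases ha.eq_or_lt with rfl | ha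
  · simp only [zero_add, zero_div]
    positivity
  · rw [div_le_div_iff₀ (by positivity) (by linarith)]
    nlinarith

lemma two_mul_div_sqrt_mul_sqrt_mul_le {r a b : ℝ} (x y : ℝ) (hr : 0 ≤ r) (ha : 0 ≤ a)
    (hb : 0 ≤ b) : 2 * (r / (√a * √b) * (x * y)) ≤ r * x ^ 2 / a + r * y ^ 2 / b := by
  rcases ha.eq_or_lt with rfl | ha
  · simp only [Real.sqrt_zero, zero_mul, div_zero, mul_zero, zero_add]
    positivity
  rcases hb.eq_or_lt with rfl | hb
  · simp only [Real.sqrt_zero, mul_zero, div_zero, zero_mul, add_zero]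
    positivity
  obtain ⟨s, hs, rfl⟩ : ∃ s, 0 < s ∧ s ^ 2 = a := ⟨√a, by positivity, Real.sq_sqrt ha.le⟩
  obtain ⟨t, ht, rfl⟩ : ∃ t, 0 < t ∧ t ^ 2 = b := ⟨√b, by positivity, Real.sq_sqrt hb.le⟩
  rw [Real.sqrt_sq hs.le, Real.sqrt_sq ht.le]
  have key : 2 * (x * y) / (s * t) ≤ x ^ 2 / s ^ 2 + y ^ 2 / t ^ 2 := by
    rw [div_add_div _ _ (by positivity) (by positivity), div_le_div_iff₀ (by positivity)
      (by positivity)]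
    nlinarith [sq_nonneg (x * t - y * s), mul_pos hs ht]
  calc 2 * (r / (s * t) * (x * y)) = r * (2 * (x * y) / (s * t)) := by ring
    _ ≤ r * (x ^ 2 / s ^ 2 + y ^ 2 / t ^ 2) := mul_le_mul_of_nonneg_left key hr
    _ = r * x ^ 2 / s ^ 2 + r * y ^ 2 / t ^ 2 := by ring

lemma sum_sq_mul_div_add_le {ι : Type*} [Fintype ι] {w d : ι → ℝ} {c D : ℝ}
    (hw : ∑ i, w i ^ 2 = 1) (hd : ∀ i, 0 ≤ d i) (hdD : ∀ i, d i ≤ D) (hc : 0 ≤ c) :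
    ∑ i, w i ^ 2 * (d i / (d i + c)) ≤ D / (D + c) :=
  calc ∑ i, w i ^ 2 * (d i / (d i + c)) ≤ ∑ i, w i ^ 2 * (D / (D + c)) :=
        Finset.sum_le_sum fun i _ => mul_le_mul_of_nonneg_left
          (div_add_le_div_add (hd i) (hdD i) hc) (sq_nonneg _)
    _ = D / (D + c) := by rw [← Finset.sum_mul, hw, one_mul]

namespace Matrix

variable {m n : Type*} [Fintype m] [Fintype n]

noncomputable def renormalize (R : Matrix m n ℝ) (α : ℝ) : Matrix m n ℝ :=
  of fun u i => R u i / (√((∑ j, R u j) + α) * √((∑ v, R v i) + α))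

lemma two_mul_dotProduct_renormalize_mulVec_le {R : Matrix m n ℝ} {α : ℝ}
    (hR : ∀ u i, 0 ≤ R u i) (hα : 0 ≤ α) (p : m → ℝ) (q : n → ℝ) :
    2 * (p ⬝ᵥ (renormalize R α *ᵥ q)) ≤
      ∑ u, p u ^ 2 * ((∑ j, R u j) / ((∑ j, R u j) + α)) +
        ∑ i, q i ^ 2 * ((∑ v, R v i) / ((∑ v, R v i) + α)) := by
  have hrow : ∀ u, 0 ≤ (∑ j, R u j) + α := fun u =>
    add_nonneg (Finset.sum_nonneg fun j _ => hR u j) hα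
  have hcol : ∀ i, 0 ≤ (∑ v, R v i) + α := fun i =>
    add_nonneg (Finset.sum_nonneg fun v _ => hR v i) hα
  calc 2 * (p ⬝ᵥ (renormalize R α *ᵥ q))
      = ∑ u, ∑ i, 2 * (renormalize R α u i * (p u * q i)) := by
        simp only [dotProduct, mulVec, Finset.mul_sum]
        exact Finset.sum_congr rfl fun u _ => Finset.sum_congr rfl fun i _ => by ring
    _ ≤ ∑ u, ∑ i, (R u i * p u ^ 2 / ((∑ j, R u j) + α) +
          R u i * q i ^ 2 / ((∑ v, R v i) + α)) :=
        Finset.sum_le_sum fun u _ => Finset.sum_le_sum fun i _ =>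
          two_mul_div_sqrt_mul_sqrt_mul_le _ _ (hR u i) (hrow u) (hcol i)
    _ = _ := by
        simp only [Finset.sum_add_distrib]
        rw [Finset.sum_comm (f := fun u i => R u i * q i ^ 2 / _)]
        congr 1 <;> refine Finset.sum_congr rfl fun _ _ => ?_ <;>
          rw [← Finset.sum_div, ← Finset.sum_mul] <;> ring

lemma dotProduct_renormalize_mulVec_le {R : Matrix m n ℝ} {α D : ℝ}
    (hR : ∀ u i, 0 ≤ R u i) (hα : 0 ≤ α) (hrow : ∀ u, ∑ i, R u i ≤ D)
    (hcol : ∀ i, ∑ u, R u i ≤ D) {p : m → ℝ} {q : n → ℝ} (hp : ∑ u, p u ^ 2 = 1)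
    (hq : ∑ i, q i ^ 2 = 1) :
    p ⬝ᵥ (renormalize R α *ᵥ q) ≤ D / (D + α) := by
  have := two_mul_dotProduct_renormalize_mulVec_le hR hα p q
  have hp' := sum_sq_mul_div_add_le hp (fun u => Finset.sum_nonneg fun i _ => hR u i) hrow hα
  have hq' := sum_sq_mul_div_add_le hq (fun i => Finset.sum_nonneg fun u _ => hR u i) hcol hα
  linarith

end Matrix

theorem renormalized_singular_value_bound_general {m n : ℕ}
    (R : Matrix (Fin m) (Fin n) ℝ)
    (hbin : ∀ u i, R u i = 0 ∨ R u i = 1)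
    (α : ℝ) (hα : 0 ≤ α)
    (dmax : ℝ)
    (hrow : ∀ u, (∑ i, R u i) ≤ dmax)
    (hcol : ∀ i, (∑ u, R u i) ≤ dmax)
    (Rd : Matrix (Fin m) (Fin n) ℝ)
    (hRd : ∀ u i, Rd u i =
      R u i / (Real.sqrt ((∑ j, R u j) + α) * Real.sqrt ((∑ v, R v i) + α)))
    (σ : ℝ) (p : Fin m → ℝ) (q : Fin n → ℝ)
    (hp : (∑ u, p u ^ 2) = 1) (hq : (∑ i, q i ^ 2) = 1)
    (hpq : Rd *ᵥ q = σ • p) :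
    σ ≤ dmax / (dmax + α) := by
  have hR : ∀ u i, 0 ≤ R u i := fun u i => by rcases hbin u i with h | h <;> simp [h]
  have hRd' : Rd = renormalize R α := Matrix.ext hRd
  have hσ : σ = p ⬝ᵥ (Rd *ᵥ q) := by
    rw [hpq, dotProduct_smul, dotProduct, smul_eq_mul]
    simp only [← sq, hp, mul_one]
  rw [hσ, hRd']
  exact dotProduct_renormalize_mulVec_le hR hα hrow hcol hp hq

/-- Theorem 3: for a binary matrix `R` with degrees bounded by `d_max > 0` and
`α ≥ 0`, every singular value of the renormalized matrix
`Ṙ_{ui} = R_{ui}/(√(d_u+α) √(d_i+α))` is at most `d_max/(d_max+α)`. -/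
theorem renormalized_singular_value_bound {m n : ℕ}
    (R : Matrix (Fin m) (Fin n) ℝ)
    (hbin : ∀ u i, R u i = 0 ∨ R u i = 1)
    (α : ℝ) (hα : 0 ≤ α)
    (dmax : ℝ) (hdmax : 0 < dmax)
    (hrow : ∀ u, (∑ i, R u i) ≤ dmax)
    (hcol : ∀ i, (∑ u, R u i) ≤ dmax)
    (Rd : Matrix (Fin m) (Fin n) ℝ)
    (hRd : ∀ u i, Rd u i =
      R u i / (Real.sqrt ((∑ j, R u j) + α) * Real.sqrt ((∑ v, R v i) + α)))
    (σ : ℝ) (p : Fin m → ℝ) (q : Fin n → ℝ)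
    (hσ : 0 ≤ σ) (hp : (∑ u, p u ^ 2) = 1) (hq : (∑ i, q i ^ 2) = 1)
    (hpq : Rd *ᵥ q = σ • p) (hqp : Rdᵀ *ᵥ p = σ • q) :
    σ ≤ dmax / (dmax + α) :=
  renormalized_singular_value_bound_general R hbin α hα dmax hrow hcol Rd hRd σ p q hp hq hpq
end

section
/- Let R ∈ {0,1}^{m×n} be a binary matrix with row sums d_u = Σ_i R_{ui} and column sums d_i = Σ_u R_{ui}, let α ≥ 0, and let d_max be an upper bound on all d_u and all d_i with d_max > 0. Then for all x ∈ ℝ^m and y ∈ ℝ^n with ‖x‖² + ‖y‖² = 1, the quadratic form of the renormalized bipartite adjacency matrix satisfies 2 · Σ_{u,i} R_{ui} · x_u y_i / (√(d_u+α) · √(d_i+α)) ≤ 1 − α/(d_max + α) = d_max/(d_max + α). -/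
/-!
Each edge contributes `2 x_u y_i / (√(d_u+α) √(d_i+α))`, which by AM-GM is at most
`x_u² / (d_u+α) + y_i² / (d_i+α)`. Summing over the edges, vertex `u` collects
`x_u² · d_u / (d_u+α)` and vertex `i` collects `y_i² · d_i / (d_i+α)`. Since `t ↦ t / (t+α)` is
monotone, every such ratio is at most `d_max / (d_max+α)`, and the squares sum to `1`.
-/

open Finset

lemma two_mul_div_sqrt_mul_sqrt_le {r a b : ℝ} (x y : ℝ) (hr : 0 ≤ r) (ha : 0 ≤ a) (hb : 0 ≤ b) :
    2 * (r * x * y / (√a * √b)) ≤ r * (x ^ 2 / a) + r * (y ^ 2 / b) := by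
  -- if `a = 0` or `b = 0` the left side is `0` (division by zero), so the degrees may vanish
  rcases ha.eq_or_lt with rfl | ha
  · simp only [Real.sqrt_zero, zero_mul, div_zero, mul_zero, zero_add]
    positivity
  rcases hb.eq_or_lt with rfl | hb
  · simp only [Real.sqrt_zero, mul_zero, div_zero, add_zero]
    positivity
  have amgm : 2 * (x / √a) * (y / √b) ≤ x ^ 2 / a + y ^ 2 / b := by
    simpa only [div_pow, Real.sq_sqrt ha.le, Real.sq_sqrt hb.le]
      using two_mul_le_add_sq (x / √a) (y / √b)
  calc 2 * (r * x * y / (√a * √b)) = r * (2 * (x / √a) * (y / √b)) := by ring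
    _ ≤ r * (x ^ 2 / a + y ^ 2 / b) := mul_le_mul_of_nonneg_left amgm hr
    _ = r * (x ^ 2 / a) + r * (y ^ 2 / b) := mul_add _ _ _

lemma div_add_le_div_add_s13 {t D α : ℝ} (ht : 0 ≤ t) (htD : t ≤ D) (hα : 0 ≤ α) :
    t / (t + α) ≤ D / (D + α) := by
  rcases (add_nonneg ht hα).eq_or_lt with h | h
  · rw [← h, div_zero]
    exact div_nonneg (ht.trans htD) (by linarith)
  · rw [div_le_div_iff₀ h (by linarith)]
    nlinarith

section Renormalized

variable {ι κ : Type*} [Fintype ι] [Fintype κ] (R : ι → κ → ℝ) {α : ℝ}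

lemma renormalized_form_le_sum_degree_mul (hR : ∀ u i, 0 ≤ R u i) (hα : 0 ≤ α)
    (x : ι → ℝ) (y : κ → ℝ) :
    2 * ∑ u, ∑ i, R u i * x u * y i / (√((∑ j, R u j) + α) * √((∑ v, R v i) + α)) ≤
      (∑ u, (∑ j, R u j) * (x u ^ 2 / ((∑ j, R u j) + α))) +
        ∑ i, (∑ v, R v i) * (y i ^ 2 / ((∑ v, R v i) + α)) := by
  have hrow : ∀ u, 0 ≤ (∑ j, R u j) + α :=
    fun u => add_nonneg (sum_nonneg fun j _ => hR u j) hα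
  have hcol : ∀ i, 0 ≤ (∑ v, R v i) + α :=
    fun i => add_nonneg (sum_nonneg fun v _ => hR v i) hα
  calc _ = ∑ u, ∑ i, 2 * (R u i * x u * y i / (√((∑ j, R u j) + α) * √((∑ v, R v i) + α))) := by
        simp only [mul_sum]
    _ ≤ ∑ u, ∑ i, (R u i * (x u ^ 2 / ((∑ j, R u j) + α)) +
          R u i * (y i ^ 2 / ((∑ v, R v i) + α))) :=
        sum_le_sum fun u _ => sum_le_sum fun i _ =>
          two_mul_div_sqrt_mul_sqrt_le _ _ (hR u i) (hrow u) (hcol i)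
    _ = _ := by
        simp only [sum_add_distrib, ← sum_mul]
        rw [sum_comm (f := fun u i => R u i * (y i ^ 2 / ((∑ v, R v i) + α)))]
        simp only [← sum_mul]

lemma renormalized_form_le (hR : ∀ u i, 0 ≤ R u i) (hα : 0 ≤ α) {D : ℝ}
    (hrow : ∀ u, ∑ j, R u j ≤ D) (hcol : ∀ i, ∑ v, R v i ≤ D) (x : ι → ℝ) (y : κ → ℝ) :
    2 * ∑ u, ∑ i, R u i * x u * y i / (√((∑ j, R u j) + α) * √((∑ v, R v i) + α)) ≤
      D / (D + α) * ((∑ u, x u ^ 2) + ∑ i, y i ^ 2) := by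
  have weight : ∀ {t : ℝ} (z : ℝ), 0 ≤ t → t ≤ D → t * (z ^ 2 / (t + α)) ≤ D / (D + α) * z ^ 2 :=
    fun z ht htD => by
      rw [mul_div_left_comm, mul_comm (D / _)]
      exact mul_le_mul_of_nonneg_left (div_add_le_div_add_s13 ht htD hα) (sq_nonneg z)
  refine (renormalized_form_le_sum_degree_mul R hR hα x y).trans ?_
  rw [mul_add, mul_sum, mul_sum]
  exact add_le_add (sum_le_sum fun u _ => weight _ (sum_nonneg fun j _ => hR u j) (hrow u))
    (sum_le_sum fun i _ => weight _ (sum_nonneg fun v _ => hR v i) (hcol i))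

end Renormalized

/-- Equation (30): Rayleigh-quotient bound for the renormalized bipartite adjacency
matrix. For a unit vector `(x, y)`,
`2 Σ_{u,i} R_{ui} x_u y_i/(√(d_u+α) √(d_i+α)) ≤ 1 − α/(d_max+α) = d_max/(d_max+α)`. -/
theorem renormalized_rayleigh_bound {m n : ℕ}
    (R : Matrix (Fin m) (Fin n) ℝ)
    (hbin : ∀ u i, R u i = 0 ∨ R u i = 1)
    (α : ℝ) (hα : 0 ≤ α)
    (dmax : ℝ) (hdmax : 0 < dmax)
    (hrow : ∀ u, (∑ i, R u i) ≤ dmax)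
    (hcol : ∀ i, (∑ u, R u i) ≤ dmax)
    (x : Fin m → ℝ) (y : Fin n → ℝ)
    (hunit : (∑ u, x u ^ 2) + (∑ i, y i ^ 2) = 1) :
    (2 * ∑ u, ∑ i,
        R u i * x u * y i /
          (Real.sqrt ((∑ j, R u j) + α) * Real.sqrt ((∑ v, R v i) + α)) ≤
      1 - α / (dmax + α)) ∧
    1 - α / (dmax + α) = dmax / (dmax + α) := by
  have hsplit : 1 - α / (dmax + α) = dmax / (dmax + α) := by
    rw [one_sub_div (by positivity), add_sub_cancel_right]
  have hR : ∀ u i, 0 ≤ R u i := fun u i => by rcases hbin u i with h | h <;> simp [h]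
  refine ⟨?_, hsplit⟩
  simpa only [hsplit, hunit, mul_one] using renormalized_form_le R hR hα hrow hcol x y
end
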